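/- arXiv:1102.4082 — 5 statements merged into one kernel-verified Lean document; each statement's English description precedes it below -/
import Mathlib

section
/- Let x > 0 be real and define φ_x(z) = 2x(2xz − z²)/(z² − 2xz + 4x² + 1). Then φ_x is a holomorphic bijection from the domain D_x = {z ∈ ℂ : Im z > 0 and Re z < x} onto the upper half-plane ℍ, and moreover φ_x(0) = 0 and φ_x(i) = i. -/
/-- For real `x > 0`, the map `φ_x(z) = 2x(2xz − z²)/(z² − 2xz + 4x² + 1)` is a
holomorphic bijection from `{z : Im z > 0, Re z < x}` onto the upper half-plane,
with `φ_x(0) = 0` and `φ_x(i) = i`. -/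
theorem stmt_2 (x : ℝ) (hx : 0 < x) (φ : ℂ → ℂ)
    (hφ : ∀ z : ℂ, φ z =
      2 * (x : ℂ) * (2 * (x : ℂ) * z - z ^ 2) /
        (z ^ 2 - 2 * (x : ℂ) * z + 4 * (x : ℂ) ^ 2 + 1)) :
    DifferentiableOn ℂ φ {z : ℂ | 0 < z.im ∧ z.re < x} ∧
    Set.BijOn φ {z : ℂ | 0 < z.im ∧ z.re < x} {z : ℂ | 0 < z.im} ∧
    φ 0 = 0 ∧ φ Complex.I = Complex.I := by
  -- denominator has negative imaginary part on the domain
  have hdim : ∀ z : ℂ, (z ^ 2 - 2 * (x : ℂ) * z + 4 * (x : ℂ) ^ 2 + 1).im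
      = 2 * z.im * (z.re - x) := by
    intro z
    simp [Complex.add_im, Complex.sub_im, Complex.mul_im, pow_two]
    ring
  have hd : ∀ z : ℂ, 0 < z.im → z.re < x →
      (z ^ 2 - 2 * (x : ℂ) * z + 4 * (x : ℂ) ^ 2 + 1) ≠ 0 := by
    intro z h1 h2 h
    have := hdim z
    rw [h] at this
    simp at this
    rcases this with h' | h' <;> linarith
  -- maps to upper half plane
  have hmaps : ∀ z : ℂ, 0 < z.im → z.re < x → 0 < (φ z).im := by
    intro z h1 h2
    have hdz := hd z h1 h2
    rw [hφ, Complex.div_im]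
    rw [div_sub_div_same]
    apply div_pos
    · have key : (2 * (x : ℂ) * (2 * (x : ℂ) * z - z ^ 2)).im *
          (z ^ 2 - 2 * (x : ℂ) * z + 4 * (x : ℂ) ^ 2 + 1).re -
          (2 * (x : ℂ) * (2 * (x : ℂ) * z - z ^ 2)).re *
          (z ^ 2 - 2 * (x : ℂ) * z + 4 * (x : ℂ) ^ 2 + 1).im
          = 4 * z.im * x * (x - z.re) * (4 * x ^ 2 + 1) := by
        simp [Complex.add_im, Complex.sub_im, Complex.mul_im, Complex.add_re,
          Complex.sub_re, Complex.mul_re, pow_two]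
        ring
      rw [key]
      have : 0 < x - z.re := by linarith
      positivity
    · exact Complex.normSq_pos.2 hdz
  refine ⟨?_, ⟨?_, ?_, ?_⟩, ?_, ?_⟩
  · -- differentiability
    have hφf : φ = fun z => 2 * (x : ℂ) * (2 * (x : ℂ) * z - z ^ 2) /
        (z ^ 2 - 2 * (x : ℂ) * z + 4 * (x : ℂ) ^ 2 + 1) := funext hφ
    rw [hφf]
    apply DifferentiableOn.div
    · fun_prop
    · fun_prop
    · intro z hz
      exact hd z hz.1 hz.2
  · -- MapsTo
    intro z hz
    exact hmaps z hz.1 hz.2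
  · -- InjOn
    intro z hz w hw hzw
    have hdz := hd z hz.1 hz.2
    have hdw := hd w hw.1 hw.2
    rw [hφ z, hφ w, div_eq_div_iff hdz hdw] at hzw
    have key : (2 * (x : ℂ) * (4 * (x : ℂ) ^ 2 + 1)) * ((z - w) * (z + w - 2 * (x : ℂ)))
        = 2 * (x : ℂ) * (2 * (x : ℂ) * w - w ^ 2) *
            (z ^ 2 - 2 * (x : ℂ) * z + 4 * (x : ℂ) ^ 2 + 1) -
          2 * (x : ℂ) * (2 * (x : ℂ) * z - z ^ 2) *
            (w ^ 2 - 2 * (x : ℂ) * w + 4 * (x : ℂ) ^ 2 + 1) := by ring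
    rw [← hzw, sub_self] at key
    have hc : (2 * (x : ℂ) * (4 * (x : ℂ) ^ 2 + 1)) ≠ 0 := by
      have : (x : ℂ) ≠ 0 := by exact_mod_cast hx.ne'
      have h2 : (4 * (x : ℂ) ^ 2 + 1) ≠ 0 := by
        intro h
        have : ((4 * x ^ 2 + 1 : ℝ) : ℂ) = 0 := by push_cast; linear_combination h
        have : (4 * x ^ 2 + 1 : ℝ) = 0 := by exact_mod_cast this
        nlinarith
      intro h
      rcases mul_eq_zero.1 h with h | h
      · rcases mul_eq_zero.1 h with h | h
        · norm_num at h
        · exact this h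
      · exact h2 h
    have hfac : (z - w) * (z + w - 2 * (x : ℂ)) = 0 := by
      rcases mul_eq_zero.1 key with h | h
      · exact absurd h hc
      · exact h
    rcases mul_eq_zero.1 hfac with h | h
    · exact sub_eq_zero.1 h
    · exfalso
      have : (z + w - 2 * (x : ℂ)).re = z.re + w.re - 2 * x := by simp
      rw [h] at this
      simp at this
      have := hz.2; have := hw.2
      linarith
  · -- SurjOn
    intro v hv
    simp only [Set.mem_setOf_eq] at hv
    have hv2x : v + 2 * (x : ℂ) ≠ 0 := by
      intro h
      have : (v + 2 * (x : ℂ)).im = v.im := by simp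
      rw [h] at this
      simp at this
      linarith
    set u : ℂ := (2 * (x : ℂ) ^ 3 - (3 * (x : ℂ) ^ 2 + 1) * v) / (v + 2 * (x : ℂ)) with hu_def
    have hu : u * (v + 2 * (x : ℂ)) = 2 * (x : ℂ) ^ 3 - (3 * (x : ℂ) ^ 2 + 1) * v :=
      div_mul_cancel₀ _ hv2x
    have huim : u.im < 0 := by
      rw [hu_def, Complex.div_im]
      have hns : 0 < Complex.normSq (v + 2 * (x : ℂ)) := Complex.normSq_pos.2 hv2x
      rw [div_sub_div_same]
      apply div_neg_of_neg_of_pos _ hns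
      have key : (2 * (x : ℂ) ^ 3 - (3 * (x : ℂ) ^ 2 + 1) * v).im * (v + 2 * (x : ℂ)).re -
          (2 * (x : ℂ) ^ 3 - (3 * (x : ℂ) ^ 2 + 1) * v).re * (v + 2 * (x : ℂ)).im
          = -(8 * x ^ 3 + 2 * x) * v.im := by
        simp [Complex.add_im, Complex.sub_im, Complex.mul_im, Complex.add_re,
          Complex.sub_re, Complex.mul_re, pow_succ, pow_two]
        ring
      rw [key]
      nlinarith [mul_pos hx hv, mul_pos (mul_pos (mul_pos hx hx) hx) hv]
    obtain ⟨s, hs⟩ := IsAlgClosed.exists_pow_nat_eq u (n := 2) (by norm_num)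
    have hsim : s.re * s.im < 0 := by
      have h2 : (s ^ 2).im = 2 * s.re * s.im := by
        simp [pow_two, Complex.mul_im]; ring
      rw [hs] at h2
      nlinarith
    set w : ℂ := if 0 < s.im then s else -s with hw_def
    have hwim : 0 < w.im := by
      rw [hw_def]
      split_ifs with h
      · exact h
      · simp
        rcases lt_trichotomy s.im 0 with h' | h' | h'
        · linarith
        · rw [h'] at hsim; simp at hsim
        · exact absurd h' h
    have hwre : w.re < 0 := by
      have hprod : w.re * w.im < 0 := by
        rw [hw_def]
        split_ifs
        · exact hsim
        · simp only [Complex.neg_re, Complex.neg_im]; nlinarith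
      nlinarith
    have hw2 : w ^ 2 = u := by
      rw [hw_def]; split_ifs <;> simpa using hs
    refine ⟨(x : ℂ) + w, ⟨?_, ?_⟩, ?_⟩
    · simp [hwim]
    · simp; linarith
    · rw [hφ]
      have hdz := hd ((x : ℂ) + w) (by simp [hwim]) (by simp; linarith)
      rw [div_eq_iff hdz]
      rw [← hw2] at hu
      linear_combination -hu
  · rw [hφ]; simp
  · rw [hφ]
    have h4 : ((Complex.I) ^ 2 - 2 * (x : ℂ) * Complex.I + 4 * (x : ℂ) ^ 2 + 1)
        = 2 * (x : ℂ) * (2 * (x : ℂ) - Complex.I) := by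
      linear_combination Complex.I_sq
    have h5 : 2 * (x : ℂ) * (2 * (x : ℂ) * Complex.I - Complex.I ^ 2)
        = Complex.I * (2 * (x : ℂ) * (2 * (x : ℂ) - Complex.I)) := by
      ring
    rw [h4, h5]
    apply mul_div_cancel_right₀
    have hx0 : (x : ℂ) ≠ 0 := by exact_mod_cast hx.ne'
    have : (2 * (x : ℂ) - Complex.I) ≠ 0 := by
      intro h
      have : (2 * (x : ℂ) - Complex.I).im = -1 := by simp
      rw [h] at this; simp at this
    intro h
    rcases mul_eq_zero.1 h with h | h
    · rcases mul_eq_zero.1 h with h | h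
      · norm_num at h
      · exact hx0 h
    · exact this h
end

section
/- Let y > 1 be real and define φ_y(z) = [sin(π/y)/(1 − cos(π/y))]·tanh(πz/(2y)). Then φ_y is a holomorphic bijection from the horizontal strip S_y = {z ∈ ℂ : 0 < Im z < y} onto the upper half-plane ℍ, and moreover φ_y(0) = 0 and φ_y(i) = i. -/
/-!
Since `tanh w = (e^{2w} - 1) / (e^{2w} + 1)`, the map `φ_y` is the composite of the dilation
`z ↦ (π / y) z` onto the strip of height `π`, the exponential, which maps that strip bijectively
onto the upper half-plane (its inverse is the principal logarithm), and the real Möbius map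
`u ↦ (c u - c) / (u + 1)`, which preserves the upper half-plane because its determinant `2c` is
positive. With `θ = π / (2y)` the constant `c` equals `cot θ`, and `tanh (θ i) = i tan θ` gives
`φ_y(i) = i`.
-/

open Set
open scoped Real

namespace Complex

noncomputable def moebius (a b c d : ℝ) (u : ℂ) : ℂ := (a * u + b) / (c * u + d)

section Moebius

variable {a b c d : ℝ}

-- Also true when `c u + d = 0`, both sides being `0` by the junk value of division.
theorem moebius_im (u : ℂ) :
    (moebius a b c d u).im = (a * d - b * c) * u.im / normSq (c * u + d) := by
  rw [moebius, div_im, ← sub_div]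
  congr 1
  simp only [add_im, add_re, im_ofReal_mul, re_ofReal_mul, ofReal_re, ofReal_im]
  ring

theorem moebius_denom_ne_zero (h : a * d - b * c ≠ 0) {u : ℂ} (hu : 0 < u.im) :
    (c : ℂ) * u + d ≠ 0 := by
  intro h0
  have him : c * u.im = 0 := by simpa using congrArg im h0
  have hc : c = 0 := by simpa [hu.ne'] using him
  have hd : d = 0 := by simpa [hc] using h0
  exact h (by simp [hc, hd])

theorem moebius_mapsTo (h : 0 < a * d - b * c) :
    MapsTo (moebius a b c d) (im ⁻¹' Ioi 0) (im ⁻¹' Ioi 0) := fun u (hu : 0 < u.im) => by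
  have hden : 0 < normSq (c * u + d) := normSq_pos.mpr (moebius_denom_ne_zero h.ne' hu)
  show 0 < (moebius a b c d u).im
  rw [moebius_im]
  positivity

theorem moebius_leftInvOn (h : 0 < a * d - b * c) :
    LeftInvOn (moebius d (-b) (-c) a) (moebius a b c d) (im ⁻¹' Ioi 0) := fun u hu => by
  have hw : moebius a b c d u * (c * u + d) = a * u + b :=
    div_mul_cancel₀ _ (moebius_denom_ne_zero h.ne' hu)
  have hden := moebius_denom_ne_zero (a := d) (b := -b) (c := -c) (d := a) (by linarith)
    (moebius_mapsTo h hu)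
  rw [moebius, div_eq_iff hden]
  push_cast
  linear_combination hw

theorem moebius_bijOn (h : 0 < a * d - b * c) :
    BijOn (moebius a b c d) (im ⁻¹' Ioi 0) (im ⁻¹' Ioi 0) := by
  have h' : 0 < d * a - -b * -c := by linarith
  refine InvOn.bijOn ⟨moebius_leftInvOn h, ?_⟩ (moebius_mapsTo h) (moebius_mapsTo h')
  simpa only [neg_neg] using moebius_leftInvOn h'

theorem moebius_differentiableOn (h : 0 < a * d - b * c) :
    DifferentiableOn ℂ (moebius a b c d) (im ⁻¹' Ioi 0) := fun u hu =>
  ((by fun_prop : DifferentiableAt ℂ (fun u : ℂ => (a : ℂ) * u + b) u).div (by fun_prop)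
    (moebius_denom_ne_zero h.ne' hu)).differentiableWithinAt

end Moebius

theorem exp_bijOn_im_Ioo_zero_pi : BijOn exp (im ⁻¹' Ioo 0 π) (im ⁻¹' Ioi 0) := by
  refine InvOn.bijOn (f' := log) ⟨fun z hz => log_exp (by linarith [hz.1, Real.pi_pos]) hz.2.le,
    fun u hu => exp_log (fun h0 => by simp [h0] at hu)⟩ ?_ ?_
  · intro z ⟨hz₀, hzπ⟩
    show 0 < (exp z).im
    rw [exp_im]
    exact mul_pos (Real.exp_pos _) (Real.sin_pos_of_pos_of_lt_pi hz₀ hzπ)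
  · intro u (hu : 0 < u.im)
    show 0 < (log u).im ∧ (log u).im < π
    rw [log_im]
    refine ⟨(arg_nonneg_iff.mpr hu.le).lt_of_ne fun h0 => ?_, arg_lt_pi_iff.mpr (.inr hu.ne')⟩
    exact hu.ne' (arg_eq_zero_iff.mp h0.symm).2

theorem ofReal_mul_bijOn_im_Ioo {r : ℝ} (hr : 0 < r) (a : ℝ) :
    BijOn (fun z : ℂ => r * z) (im ⁻¹' Ioo 0 a) (im ⁻¹' Ioo 0 (r * a)) := by
  have hr' : (r : ℂ) ≠ 0 := ofReal_ne_zero.mpr hr.ne'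
  refine InvOn.bijOn (f' := fun w : ℂ => ((r⁻¹ : ℝ) : ℂ) * w)
    ⟨fun z _ => ?_, fun w _ => ?_⟩ ?_ ?_
  · simp [inv_mul_cancel_left₀ hr']
  · simp [mul_inv_cancel_left₀ hr']
  · intro z ⟨hz₀, hza⟩
    simp only [mem_preimage, im_ofReal_mul, mem_Ioo]
    exact ⟨mul_pos hr hz₀, mul_lt_mul_of_pos_left hza hr⟩
  · intro w ⟨hw₀, hwa⟩
    simp only [mem_preimage, im_ofReal_mul, mem_Ioo]
    exact ⟨mul_pos (inv_pos.mpr hr) hw₀, (inv_mul_lt_iff₀ hr).mpr hwa⟩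

theorem tanh_eq_exp_two_mul (w : ℂ) : tanh w = (exp (2 * w) - 1) / (exp (2 * w) + 1) := by
  rw [tanh_eq_sinh_div_cosh, sinh, cosh, div_div_div_cancel_right₀ two_ne_zero,
    ← mul_div_mul_left _ _ (exp_ne_zero w), two_mul, exp_add, exp_neg]
  congr 1 <;> field_simp

theorem exp_ofReal_mul_bijOn_im_Ioo {y : ℝ} (hy : 0 < y) :
    BijOn (fun z : ℂ => exp ((π / y : ℝ) * z)) (im ⁻¹' Ioo 0 y) (im ⁻¹' Ioi 0) := by
  refine exp_bijOn_im_Ioo_zero_pi.comp (g := exp) ?_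
  simpa [div_mul_cancel₀ π hy.ne'] using ofReal_mul_bijOn_im_Ioo (by positivity : 0 < π / y) y

theorem ofReal_mul_tanh (c : ℝ) (w : ℂ) : c * tanh w = moebius c (-c) 1 1 (exp (2 * w)) := by
  rw [tanh_eq_exp_two_mul, moebius]
  push_cast
  ring

theorem ofReal_cot_mul_tanh_mul_I {x : ℝ} (hs : Real.sin x ≠ 0) (hc : Real.cos x ≠ 0) :
    (Real.cot x : ℂ) * tanh (x * I) = I := by
  rw [tanh_mul_I, ← ofReal_tan, ← mul_assoc, ← ofReal_mul, Real.cot_eq_cos_div_sin,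
    Real.tan_eq_sin_div_cos, div_mul_div_cancel₀ hs, div_self hc, ofReal_one, one_mul]

end Complex

theorem Real.sin_two_mul_div_one_sub_cos_two_mul (x : ℝ) :
    sin (2 * x) / (1 - cos (2 * x)) = cot x := by
  rw [cot_eq_cos_div_sin, sin_two_mul, cos_two_mul, cos_sq',
    show 1 - (2 * (1 - sin x ^ 2) - 1) = 2 * sin x * sin x by ring, mul_assoc, mul_assoc,
    mul_div_mul_left _ _ two_ne_zero]
  rcases eq_or_ne (sin x) 0 with h | h
  · simp [h]
  · exact mul_div_mul_left _ _ h

open Complex in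
/-- For real `y > 1`, the map `φ_y(z) = [sin(π/y)/(1 − cos(π/y))]·tanh(πz/(2y))`
is a holomorphic bijection from the strip `{z : 0 < Im z < y}` onto the upper
half-plane, with `φ_y(0) = 0` and `φ_y(i) = i`. -/
theorem stmt_4 (y : ℝ) (hy : 1 < y) (φ : ℂ → ℂ)
    (hφ : ∀ z : ℂ, φ z =
      ((Real.sin (Real.pi / y) / (1 - Real.cos (Real.pi / y)) : ℝ) : ℂ) *
        Complex.tanh ((Real.pi : ℂ) * z / (2 * (y : ℂ)))) :
    DifferentiableOn ℂ φ {z : ℂ | 0 < z.im ∧ z.im < y} ∧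
    Set.BijOn φ {z : ℂ | 0 < z.im ∧ z.im < y} {z : ℂ | 0 < z.im} ∧
    φ 0 = 0 ∧ φ Complex.I = Complex.I := by
  set θ := π / (2 * y) with hθ_def
  have hθ : 0 < θ ∧ θ < π / 2 := ⟨by positivity,
    div_lt_div_of_pos_left Real.pi_pos two_pos (by linarith)⟩
  have hsin : 0 < Real.sin θ := Real.sin_pos_of_pos_of_lt_pi hθ.1 (by linarith)
  have hcos : 0 < Real.cos θ := Real.cos_pos_of_mem_Ioo ⟨by linarith, hθ.2⟩
  have hc : Real.sin (π / y) / (1 - Real.cos (π / y)) = Real.cot θ := by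
    rw [show π / y = 2 * θ by rw [hθ_def]; field_simp, Real.sin_two_mul_div_one_sub_cos_two_mul]
  have hcot : 0 < Real.cot θ := by rw [Real.cot_eq_cos_div_sin]; positivity
  have hdet : 0 < Real.cot θ * 1 - -Real.cot θ * 1 := by linarith
  have hφ_eq :
      φ = moebius (Real.cot θ) (-Real.cot θ) 1 1 ∘ fun z => exp ((π / y : ℝ) * z) := by
    ext z
    rw [hφ, hc, ofReal_mul_tanh, Function.comp_apply]
    congr 2
    push_cast
    field_simp
  have hexp := exp_ofReal_mul_bijOn_im_Ioo (by positivity : 0 < y)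
  refine ⟨?_, ?_, ?_, ?_⟩
  · rw [hφ_eq]
    exact (moebius_differentiableOn hdet).comp (by fun_prop) hexp.mapsTo
  · rw [hφ_eq]
    exact (moebius_bijOn hdet).comp hexp
  · simp [hφ]
  · rw [hφ, hc, show (π : ℂ) * I / (2 * y) = θ * I by rw [hθ_def]; push_cast; ring,
      ofReal_cot_mul_tanh_mul_I hsin.ne' hcos.ne']
end

section
/- Let r > 1 be real and define φ_r(z) = (r² − 1)z/(z² + r²). Then φ_r is a holomorphic bijection from the half-disc D_r = {z ∈ ℂ : Im z > 0 and |z| < r} onto the upper half-plane ℍ, and moreover φ_r(0) = 0 and φ_r(i) = i. -/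
/-!
The imaginary part of `φ_r(z)` has the sign of `(r² - |z|²) Im z`, so `φ_r` maps the half-disc
into `ℍ`. The map is invariant under the inversion `z ↦ r²/z` in the circle `|z| = r`, and
`φ_r z = φ_r w` forces `z = w` or `z w = r²`, which is impossible inside the disc. Every `w ∈ ℍ`
is attained by a root of the quadratic `w z² - (r² - 1) z + r² w`; if that root lies outside
the disc, its inversion lies inside.
-/

open Complex

noncomputable def halfDiscMap (r : ℝ) (z : ℂ) : ℂ := ((r : ℂ) ^ 2 - 1) * z / (z ^ 2 + (r : ℂ) ^ 2)

def halfDisc (r : ℝ) : Set ℂ := {z | 0 < z.im ∧ ‖z‖ < r}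

namespace halfDiscMap

variable {r : ℝ} {z w : ℂ}

lemma sq_add_sq_ne_zero_of_norm_lt (hz : ‖z‖ < r) : z ^ 2 + (r : ℂ) ^ 2 ≠ 0 := by
  intro h
  have hnorm : ‖z‖ ^ 2 = |r| ^ 2 := by
    simpa using congrArg (‖·‖) (eq_neg_of_add_eq_zero_left h)
  nlinarith [norm_nonneg z, le_abs_self r, abs_nonneg r]

lemma differentiableOn (r : ℝ) : DifferentiableOn ℂ (halfDiscMap r) (halfDisc r) :=
  DifferentiableOn.div (by fun_prop) (by fun_prop) fun _ hz ↦ sq_add_sq_ne_zero_of_norm_lt hz.2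

lemma im_mul_normSq (hd : z ^ 2 + (r : ℂ) ^ 2 ≠ 0) :
    (halfDiscMap r z).im * normSq (z ^ 2 + (r : ℂ) ^ 2)
      = (r ^ 2 - 1) * (r ^ 2 - normSq z) * z.im := by
  have hns : normSq (z ^ 2 + (r : ℂ) ^ 2) ≠ 0 := normSq_eq_zero.not.mpr hd
  rw [halfDiscMap, div_im]
  field_simp
  simp only [pow_two, mul_im, sub_re, mul_re, ofReal_re, ofReal_im, mul_zero, sub_zero, one_re,
    sub_im, zero_mul, add_zero, one_im, sub_self, add_re, add_im, normSq_apply]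
  ring

lemma im_pos_iff (hr : 1 < r) (hd : z ^ 2 + (r : ℂ) ^ 2 ≠ 0) :
    0 < (halfDiscMap r z).im ↔ 0 < (r ^ 2 - normSq z) * z.im := by
  have hr2 : 0 < r ^ 2 - 1 := by nlinarith
  rw [← mul_pos_iff_of_pos_right (normSq_pos.mpr hd), im_mul_normSq hd, mul_assoc,
    mul_pos_iff_of_pos_left hr2]

lemma mapsTo (hr : 1 < r) : Set.MapsTo (halfDiscMap r) (halfDisc r) {z | 0 < z.im} := by
  intro z ⟨him, hnorm⟩
  have hnormSq : normSq z < r ^ 2 := by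
    rw [← Complex.sq_norm]; exact pow_lt_pow_left₀ hnorm (norm_nonneg z) two_ne_zero
  exact (im_pos_iff hr (sq_add_sq_ne_zero_of_norm_lt hnorm)).mpr
    (mul_pos (sub_pos.mpr hnormSq) him)

lemma eq_or_mul_eq_sq (hr : r ^ 2 ≠ 1) (hz : z ^ 2 + (r : ℂ) ^ 2 ≠ 0)
    (hw : w ^ 2 + (r : ℂ) ^ 2 ≠ 0) (h : halfDiscMap r z = halfDiscMap r w) :
    z = w ∨ z * w = (r : ℂ) ^ 2 := by
  have hc : (r : ℂ) ^ 2 - 1 ≠ 0 := sub_ne_zero.mpr (by exact_mod_cast hr)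
  rw [halfDiscMap, halfDiscMap, div_eq_div_iff hz hw] at h
  have hfactor : ((r : ℂ) ^ 2 - 1) * ((z - w) * ((r : ℂ) ^ 2 - z * w)) = 0 := by
    linear_combination h
  rcases mul_eq_zero.mp ((mul_eq_zero.mp hfactor).resolve_left hc) with h | h
  · exact .inl (sub_eq_zero.mp h)
  · exact .inr (sub_eq_zero.mp h).symm

lemma injOn (hr : 1 < r) : Set.InjOn (halfDiscMap r) (halfDisc r) := by
  intro z hz w hw h
  have hr2 : r ^ 2 ≠ 1 := by nlinarith
  refine (eq_or_mul_eq_sq hr2 (sq_add_sq_ne_zero_of_norm_lt hz.2)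
    (sq_add_sq_ne_zero_of_norm_lt hw.2) h).resolve_right fun hzw ↦ ?_
  have : ‖z‖ * ‖w‖ = r ^ 2 := by simpa using congrArg (‖·‖) hzw
  nlinarith [norm_nonneg z, norm_nonneg w, hz.2, hw.2]

lemma inversion (hr : r ≠ 0) (hz : z ≠ 0) : halfDiscMap r ((r : ℂ) ^ 2 / z) = halfDiscMap r z := by
  have hr' : (r : ℂ) ≠ 0 := ofReal_ne_zero.mpr hr
  rw [halfDiscMap, halfDiscMap]
  field_simp
  ring

lemma inversion_mem_halfDisc (hr : 0 < r) (hout : r ^ 2 < normSq z) (him : z.im < 0) :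
    (r : ℂ) ^ 2 / z ∈ halfDisc r := by
  have hz : 0 < normSq z := (pow_pos hr 2).trans hout
  have hnorm : r ^ 2 < ‖z‖ ^ 2 := by rwa [Complex.sq_norm]
  have hrz : r < ‖z‖ := lt_of_pow_lt_pow_left₀ 2 (norm_nonneg z) hnorm
  constructor
  · rw [div_eq_mul_inv, ← ofReal_pow, im_ofReal_mul, inv_im]
    exact mul_pos (by positivity) (div_pos (neg_pos.mpr him) hz)
  · rw [norm_div, norm_pow, norm_real, Real.norm_of_nonneg hr.le, div_lt_iff₀ (hr.trans hrz)]
    nlinarith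

lemma exists_eq (hr : r ≠ 0) (hr1 : r ^ 2 ≠ 1) (hw : w ≠ 0) :
    ∃ z, z ^ 2 + (r : ℂ) ^ 2 ≠ 0 ∧ halfDiscMap r z = w := by
  have hc : (r : ℂ) ^ 2 - 1 ≠ 0 := sub_ne_zero.mpr (by exact_mod_cast hr1)
  obtain ⟨z, hz⟩ := exists_quadratic_eq_zero (b := -((r : ℂ) ^ 2 - 1)) (c := (r : ℂ) ^ 2 * w) hw
    (IsAlgClosed.exists_eq_mul_self _)
  have hd : z ^ 2 + (r : ℂ) ^ 2 ≠ 0 := by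
    intro hd
    have hcz : ((r : ℂ) ^ 2 - 1) * z = 0 := by linear_combination w * hd - hz
    have hz0 : z = 0 := (mul_eq_zero.mp hcz).resolve_left hc
    simp [hz0, hr] at hd
  exact ⟨z, hd, by rw [halfDiscMap, div_eq_iff hd]; linear_combination -hz⟩

lemma surjOn (hr : 1 < r) : Set.SurjOn (halfDiscMap r) (halfDisc r) {z | 0 < z.im} := by
  intro w (hw : 0 < w.im)
  have hr0 : 0 < r := zero_lt_one.trans hr
  have hr2 : r ^ 2 ≠ 1 := by nlinarith
  obtain ⟨z, hd, rfl⟩ := exists_eq (w := w) hr0.ne' hr2 (by rintro rfl; simp at hw)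
  have hsign := (im_pos_iff hr hd).mp hw
  rcases lt_or_ge (normSq z) (r ^ 2) with hin | hout
  · refine ⟨z, ⟨pos_of_mul_pos_right hsign (sub_pos.mpr hin).le, ?_⟩, rfl⟩
    rw [← Complex.sq_norm] at hin
    exact lt_of_pow_lt_pow_left₀ 2 hr0.le hin
  · have him : z.im < 0 := neg_of_mul_pos_right hsign (sub_nonpos.mpr hout)
    have hout' : r ^ 2 < normSq z := hout.lt_of_ne (by rintro h; simp [← h] at hsign)
    have hz : z ≠ 0 := by rintro rfl; simp at him
    exact ⟨_, inversion_mem_halfDisc hr0 hout' him, inversion hr0.ne' hz⟩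

lemma map_I (hr : r ^ 2 ≠ 1) : halfDiscMap r I = I := by
  have hc : (r : ℂ) ^ 2 - 1 ≠ 0 := sub_ne_zero.mpr (by exact_mod_cast hr)
  rw [halfDiscMap, I_sq, div_eq_iff (by contrapose! hc; linear_combination hc)]
  ring

end halfDiscMap

/-- For real `r > 1`, the map `φ_r(z) = (r² − 1)z/(z² + r²)` is a holomorphic
bijection from the half-disc `{z : Im z > 0, |z| < r}` onto the upper
half-plane, with `φ_r(0) = 0` and `φ_r(i) = i`. -/
theorem stmt_6 (r : ℝ) (hr : 1 < r) (φ : ℂ → ℂ)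
    (hφ : ∀ z : ℂ, φ z = ((r : ℂ) ^ 2 - 1) * z / (z ^ 2 + (r : ℂ) ^ 2)) :
    DifferentiableOn ℂ φ {z : ℂ | 0 < z.im ∧ ‖z‖ < r} ∧
    Set.BijOn φ {z : ℂ | 0 < z.im ∧ ‖z‖ < r} {z : ℂ | 0 < z.im} ∧
    φ 0 = 0 ∧ φ Complex.I = Complex.I := by
  obtain rfl : φ = halfDiscMap r := funext hφ
  exact ⟨halfDiscMap.differentiableOn r,
    ⟨halfDiscMap.mapsTo hr, halfDiscMap.injOn hr, halfDiscMap.surjOn hr⟩,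
    by simp [halfDiscMap], halfDiscMap.map_I (by nlinarith)⟩
end

section
/- Let l > 0 be real, set s = √(1 + l²), θ = π − arctan l, and define f(z) = (l + z)/(l − z). Then f is a holomorphic bijection from the domain D = {z ∈ ℂ : Im z > 0 and |z − i| < s} onto the open wedge W_θ = {w ∈ ℂ : w ≠ 0 and 0 < arg w < θ}, and moreover f(0) = 1 and f(i) = e^{iα} where α = π − 2·arctan l. -/
/-!
`f` is a Möbius map with inverse `w ↦ l (w - 1) / (w + 1)`, and both maps preserve the upper
half-plane since `Im f(z) = 2 l Im z / |l - z|²`. For `Im w > 0` the angle condition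
`arg w < π - arctan l` is the linear inequality `l Re w + Im w > 0` (the sign of
`sin (π - arctan l - arg w)`), and for `w = f z` this quantity equals
`l (1 + l² - |z - i|²) / |l - z|²`. So the disc condition on `z` is exactly the angle condition
on `f z`.
-/

open Complex

theorem Real.lt_iff_sin_sub_pos {φ ψ : ℝ} (h₁ : -Real.pi < ψ - φ) (h₂ : ψ - φ < Real.pi) :
    φ < ψ ↔ 0 < Real.sin (ψ - φ) := by
  refine ⟨fun h ↦ Real.sin_pos_of_pos_of_lt_pi (by linarith) h₂, fun h ↦ ?_⟩
  by_contra! hle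
  exact (Real.sin_nonpos_of_nonpos_of_neg_pi_le (by linarith) h₁.le).not_gt h

theorem Complex.arg_pos_of_im_pos {w : ℂ} (hw : 0 < w.im) : 0 < arg w :=
  (arg_nonneg_iff.2 hw.le).lt_of_ne fun h ↦ hw.ne' (arg_eq_zero_iff.1 h.symm).2

theorem Complex.ne_zero_of_im_ne_zero {z : ℂ} (hz : z.im ≠ 0) : z ≠ 0 := fun h ↦ by
  simp [h] at hz

theorem Complex.im_pos_of_arg_pos_of_arg_lt_pi {w : ℂ} (h₀ : 0 < arg w) (hπ : arg w < Real.pi) :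
    0 < w.im := by
  rw [← norm_mul_sin_arg]
  exact mul_pos (norm_pos_iff.2 fun h ↦ by simp [h] at h₀) (Real.sin_pos_of_pos_of_lt_pi h₀ hπ)

theorem Complex.arg_lt_iff_of_im_pos {w : ℂ} (hw : 0 < w.im) {ψ : ℝ} (hψ₀ : 0 ≤ ψ)
    (hψ : ψ ≤ Real.pi) : arg w < ψ ↔ 0 < Real.sin ψ * w.re - Real.cos ψ * w.im := by
  have hw₀ := ne_zero_of_im_ne_zero hw.ne'
  have h₁ := arg_pos_of_im_pos hw
  have h₂ : arg w < Real.pi := arg_lt_pi_iff.2 (Or.inr hw.ne')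
  rw [Real.lt_iff_sin_sub_pos (by linarith) (by linarith), Real.sin_sub, sin_arg, cos_arg hw₀,
    ← mul_div_assoc, ← mul_div_assoc, div_sub_div_same,
    div_pos_iff_of_pos_right (norm_pos_iff.2 hw₀)]

theorem Complex.arg_lt_pi_sub_arctan_iff {l : ℝ} (hl : 0 ≤ l) {w : ℂ} (hw : 0 < w.im) :
    arg w < Real.pi - Real.arctan l ↔ 0 < l * w.re + w.im := by
  have h₀ := Real.arctan_nonneg.2 hl
  have hs : 0 < √(1 + l ^ 2) := by positivity
  have key : Real.sin (Real.pi - Real.arctan l) * w.re - Real.cos (Real.pi - Real.arctan l) * w.im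
      = (l * w.re + w.im) / √(1 + l ^ 2) := by
    rw [Real.sin_pi_sub, Real.cos_pi_sub, Real.sin_arctan, Real.cos_arctan]
    ring
  rw [arg_lt_iff_of_im_pos hw (by linarith [Real.arctan_lt_pi_div_two l]) (by linarith), key,
    div_pos_iff_of_pos_right hs]

theorem Complex.exp_pi_sub_two_arctan_mul_I (l : ℝ) :
    exp ((Real.pi - 2 * Real.arctan l : ℝ) * I) = (l + I) / (l - I) := by
  have h1 : (0:ℝ) < 1 + l ^ 2 := by positivity
  have hne : (l : ℂ) - I ≠ 0 := fun h ↦ by simpa using congrArg im h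
  have hs : (√(1 + l ^ 2) : ℂ) ≠ 0 := ofReal_ne_zero.2 (Real.sqrt_pos.2 h1).ne'
  have hs2 : (√(1 + l ^ 2) : ℂ) ^ 2 = 1 + l ^ 2 := by exact_mod_cast Real.sq_sqrt h1.le
  rw [exp_mul_I, ← ofReal_cos, ← ofReal_sin, Real.cos_pi_sub, Real.sin_pi_sub, Real.cos_two_mul,
    Real.sin_two_mul, Real.sin_arctan, Real.cos_arctan, eq_div_iff hne]
  push_cast
  field_simp
  linear_combination (-2 * I) * hs2 - 2 * l * I_sq

def wedge (θ : ℝ) : Set ℂ := {w | w ≠ 0 ∧ 0 < w.arg ∧ w.arg < θ}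

theorem im_pos_of_mem_wedge {θ : ℝ} (hθ : θ ≤ Real.pi) {w : ℂ} (hw : w ∈ wedge θ) : 0 < w.im :=
  im_pos_of_arg_pos_of_arg_lt_pi hw.2.1 (hw.2.2.trans_le hθ)

noncomputable def wedgeMap (l : ℝ) (z : ℂ) : ℂ := (l + z) / (l - z)
noncomputable def wedgeMapInv (l : ℝ) (w : ℂ) : ℂ := l * (w - 1) / (w + 1)

section
variable (l : ℝ) {z w : ℂ}

theorem wedgeMap_im (z : ℂ) : (wedgeMap l z).im = 2 * l * z.im / normSq (l - z) := by
  simp only [wedgeMap, div_im, add_re, add_im, sub_re, sub_im, ofReal_re, ofReal_im]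
  ring

theorem wedgeMap_re_mul_add_im (z : ℂ) : l * (wedgeMap l z).re + (wedgeMap l z).im =
    l * (1 + l ^ 2 - normSq (z - I)) / normSq (l - z) := by
  simp only [wedgeMap, div_re, div_im, add_re, add_im, sub_re, sub_im, ofReal_re, ofReal_im,
    normSq_apply, I_re, I_im]
  ring

theorem wedgeMapInv_im (w : ℂ) : (wedgeMapInv l w).im = 2 * l * w.im / normSq (w + 1) := by
  simp only [wedgeMapInv, div_im, mul_re, mul_im, add_re, add_im, sub_re, sub_im, ofReal_re,
    ofReal_im, one_re, one_im]
  ring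

theorem ofReal_sub_ne_zero_of_im_pos (hz : 0 < z.im) : (l : ℂ) - z ≠ 0 :=
  ne_zero_of_im_ne_zero (by simpa using hz.ne')

theorem add_one_ne_zero_of_im_pos (hw : 0 < w.im) : w + 1 ≠ 0 :=
  ne_zero_of_im_ne_zero (by simpa using hw.ne')

theorem wedgeMapInv_wedgeMap (hl : l ≠ 0) (hz : (l : ℂ) - z ≠ 0) :
    wedgeMapInv l (wedgeMap l z) = z := by
  have : (l : ℂ) ≠ 0 := ofReal_ne_zero.2 hl
  unfold wedgeMap wedgeMapInv
  grind

theorem wedgeMap_wedgeMapInv (hl : l ≠ 0) (hw : w + 1 ≠ 0) :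
    wedgeMap l (wedgeMapInv l w) = w := by
  have : (l : ℂ) ≠ 0 := ofReal_ne_zero.2 hl
  unfold wedgeMap wedgeMapInv
  grind

theorem differentiableOn_wedgeMap : DifferentiableOn ℂ (wedgeMap l) {z | 0 < z.im} :=
  .div (by fun_prop) (by fun_prop) fun _ ↦ ofReal_sub_ne_zero_of_im_pos l

theorem wedgeMap_im_pos (hl : 0 < l) (hz : 0 < z.im) : 0 < (wedgeMap l z).im := by
  rw [wedgeMap_im]
  exact div_pos (by positivity) (normSq_pos.2 (ofReal_sub_ne_zero_of_im_pos l hz))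

theorem wedgeMapInv_im_pos (hl : 0 < l) (hw : 0 < w.im) : 0 < (wedgeMapInv l w).im := by
  rw [wedgeMapInv_im]
  exact div_pos (by positivity) (normSq_pos.2 (add_one_ne_zero_of_im_pos hw))

theorem arg_wedgeMap_lt_iff (hl : 0 < l) (hz : 0 < z.im) :
    arg (wedgeMap l z) < Real.pi - Real.arctan l ↔ ‖z - I‖ < √(1 + l ^ 2) := by
  rw [arg_lt_pi_sub_arctan_iff hl.le (wedgeMap_im_pos l hl hz), wedgeMap_re_mul_add_im,
    div_pos_iff_of_pos_right (normSq_pos.2 (ofReal_sub_ne_zero_of_im_pos l hz)),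
    mul_pos_iff_of_pos_left hl, sub_pos, norm_def, Real.sqrt_lt_sqrt_iff (normSq_nonneg _)]

theorem bijOn_wedgeMap (hl : 0 < l) :
    Set.BijOn (wedgeMap l) {z | 0 < z.im ∧ ‖z - I‖ < √(1 + l ^ 2)}
      (wedge (Real.pi - Real.arctan l)) := by
  have him : ∀ w ∈ wedge (Real.pi - Real.arctan l), 0 < w.im := fun w ↦
    im_pos_of_mem_wedge (by linarith [Real.arctan_pos.2 hl])
  have hinv : ∀ w ∈ wedge (Real.pi - Real.arctan l), wedgeMap l (wedgeMapInv l w) = w :=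
    fun w hw ↦ wedgeMap_wedgeMapInv l hl.ne' (add_one_ne_zero_of_im_pos (him w hw))
  refine Set.InvOn.bijOn (f' := wedgeMapInv l) ⟨fun z hz ↦ ?_, hinv⟩
    (fun z ⟨hz, hzs⟩ ↦ ?_) (fun w hw ↦ ?_)
  · exact wedgeMapInv_wedgeMap l hl.ne' (ofReal_sub_ne_zero_of_im_pos l hz.1)
  · have him := wedgeMap_im_pos l hl hz
    exact ⟨ne_zero_of_im_ne_zero him.ne', arg_pos_of_im_pos him,
      (arg_wedgeMap_lt_iff l hl hz).2 hzs⟩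
  · have him' := wedgeMapInv_im_pos l hl (him w hw)
    refine ⟨him', (arg_wedgeMap_lt_iff l hl him').1 ?_⟩
    rw [hinv w hw]
    exact hw.2.2

end

/-- For real `l > 0`, with `s = √(1 + l²)`, `θ = π − arctan l` and
`α = π − 2·arctan l`, the map `f(z) = (l + z)/(l − z)` is a holomorphic
bijection from `{z : Im z > 0, |z − i| < s}` onto the wedge
`{w ≠ 0 : 0 < arg w < θ}`, with `f(0) = 1` and `f(i) = e^{iα}`. -/
theorem stmt_10 (l s θ α : ℝ) (hl : 0 < l)
    (hs : s = Real.sqrt (1 + l ^ 2))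
    (hθ : θ = Real.pi - Real.arctan l)
    (hα : α = Real.pi - 2 * Real.arctan l)
    (f : ℂ → ℂ)
    (hf : ∀ z : ℂ, f z = ((l : ℂ) + z) / ((l : ℂ) - z)) :
    DifferentiableOn ℂ f {z : ℂ | 0 < z.im ∧ ‖z - Complex.I‖ < s} ∧
    Set.BijOn f {z : ℂ | 0 < z.im ∧ ‖z - Complex.I‖ < s}
      {w : ℂ | w ≠ 0 ∧ 0 < w.arg ∧ w.arg < θ} ∧
    f 0 = 1 ∧ f Complex.I = Complex.exp ((α : ℂ) * Complex.I) := by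
  subst hs hθ hα
  obtain rfl : f = wedgeMap l := funext hf
  refine ⟨(differentiableOn_wedgeMap l).mono fun z hz ↦ hz.1, bijOn_wedgeMap l hl, ?_, ?_⟩
  · simp [wedgeMap, ofReal_ne_zero.2 hl.ne']
  · exact (exp_pi_sub_two_arctan_mul_I l).symm
end

section
/- Let s > 1 be real, set l = √(s² − 1), θ = π − arctan l, α = π − 2·arctan l, and let φ_s = ψ ∘ g ∘ f be the conformal map of D_s = {z ∈ ℂ : Im z > 0, |z − i| < s} onto the upper half-plane fixing 0 and sending i to i, where f(z) = (l + z)/(l − z), g(z) = exp((π/θ)·Log z) − 1, x + iy = e^{iπα/θ} − 1, and ψ(z) = y·z/(x² + y² − x·z). Then |φ_s′(0)| = π·sin(πα/θ)/(l·θ·(1 − cos(πα/θ))) and |φ_s′(i)| = 2πl/(θ·sin(πα/θ)·(l² + 1)). -/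
/-!
Both derivatives come from the chain rule applied to three explicit maps. At `0` the chain
passes through `f 0 = 1` and `g 1 = 0`. At `i` the key fact is `f i = (l + i)² / (l² + 1) = e^{iα}`,
so `g (f i) = e^{iπα/θ} - 1 = w := x + iy` with `log` evaluated on its principal branch; and the
denominator of `ψ` factors at `w` as `x² + y² - x w = -i y w`, whence `|ψ' w| = 1 / y`.
-/

open Complex
open scoped Real

namespace Real

theorem cos_pi_sub_two_mul_arctan (l : ℝ) :
    cos (π - 2 * arctan l) = (l ^ 2 - 1) / (l ^ 2 + 1) := by
  rw [cos_pi_sub, cos_two_mul, cos_sq_arctan]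
  field_simp
  ring

theorem sin_pi_sub_two_mul_arctan (l : ℝ) :
    sin (π - 2 * arctan l) = 2 * l / (l ^ 2 + 1) := by
  have hsin : sin (arctan l) = l * cos (arctan l) := by
    have := tan_arctan l
    rwa [tan_eq_sin_div_cos, div_eq_iff (cos_arctan_pos l).ne'] at this
  rw [sin_pi_sub, sin_two_mul, hsin, show 2 * (l * cos (arctan l)) * cos (arctan l) =
    2 * l * cos (arctan l) ^ 2 by ring, cos_sq_arctan]
  field_simp
  ring

end Real

noncomputable section

namespace SegmentMap

def f (l z : ℂ) : ℂ := (l + z) / (l - z)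

-- The exponent `c` stands for the paper's `π / θ`.
def g (c z : ℂ) : ℂ := exp (c * log z) - 1

def ψ (x y z : ℂ) : ℂ := y * z / (x ^ 2 + y ^ 2 - x * z)

theorem hasDerivAt_f {l z : ℂ} (h : l - z ≠ 0) : HasDerivAt (f l) (2 * l / (l - z) ^ 2) z :=
  (((hasDerivAt_id' z).const_add l).div ((hasDerivAt_id' z).const_sub l) h).congr_deriv (by ring)

theorem hasDerivAt_g (c : ℂ) {z : ℂ} (hz : z ∈ slitPlane) :
    HasDerivAt (g c) (exp (c * log z) * c / z) z :=
  (((hasDerivAt_log hz).const_mul c).cexp.sub_const 1).congr_deriv (by ring)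

theorem hasDerivAt_ψ (x y : ℂ) {z : ℂ} (h : x ^ 2 + y ^ 2 - x * z ≠ 0) :
    HasDerivAt (ψ x y) (y * (x ^ 2 + y ^ 2) / (x ^ 2 + y ^ 2 - x * z) ^ 2) z := by
  have hnum : HasDerivAt (fun z => y * z) y z := by
    simpa using (hasDerivAt_id' z).const_mul y
  have hden : HasDerivAt (fun z => x ^ 2 + y ^ 2 - x * z) (-x) z := by
    simpa using ((hasDerivAt_id' z).const_mul x).const_sub (x ^ 2 + y ^ 2)
  exact (hnum.div hden h).congr_deriv (by ring)

theorem f_zero {l : ℂ} (hl : l ≠ 0) : f l 0 = 1 := by simp [f, hl]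

theorem g_one (c : ℂ) : g c 1 = 0 := by simp [g]

theorem f_I (l : ℝ) : f l I = exp ((π - 2 * Real.arctan l : ℝ) * I) := by
  have hden : (l : ℂ) - I ≠ 0 := fun h => by simpa using congrArg im h
  rw [f, exp_mul_I, ← ofReal_cos, ← ofReal_sin, Real.cos_pi_sub_two_mul_arctan,
    Real.sin_pi_sub_two_mul_arctan, div_eq_iff hden]
  have : (l : ℂ) ^ 2 + 1 ≠ 0 := by exact_mod_cast (by positivity : l ^ 2 + 1 ≠ 0)
  push_cast
  field_simp
  linear_combination (2 * (l : ℂ)) * I_sq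

theorem g_exp_mul_I (c : ℝ) {a : ℝ} (ha₁ : -π < a) (ha₂ : a ≤ π) :
    g c (exp (a * I)) = exp ((c * a : ℝ) * I) - 1 := by
  rw [g, log_exp (by simpa using ha₁) (by simpa using ha₂)]
  push_cast
  ring_nf

theorem hasDerivAt_comp_zero (c : ℂ) {l x y : ℂ} (hl : l ≠ 0) (hA : x ^ 2 + y ^ 2 ≠ 0) :
    HasDerivAt (ψ x y ∘ g c ∘ f l) (y / (x ^ 2 + y ^ 2) * c * (2 / l)) 0 := by
  have hf := hasDerivAt_f (z := 0) (by simpa using hl)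
  have hg := hasDerivAt_g c one_mem_slitPlane
  have hψ := hasDerivAt_ψ x y (z := 0) (by simpa using hA)
  refine (hψ.comp_of_eq 0 (hg.comp_of_eq 0 hf (f_zero hl).symm) ?_).congr_deriv ?_
  · simp [f_zero hl, g_one]
  · simp only [log_one, mul_zero, exp_zero, sub_zero]
    field_simp

theorem norm_deriv_comp_zero (c : ℝ) {l x y : ℝ} (hl : 0 < l) (hA : 0 < x ^ 2 + y ^ 2) :
    ‖deriv (ψ x y ∘ g c ∘ f l) 0‖ = 2 * |c| * |y| / (l * (x ^ 2 + y ^ 2)) := by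
  rw [(hasDerivAt_comp_zero c (ofReal_ne_zero.2 hl.ne') (by exact_mod_cast hA.ne')).deriv,
    show (y : ℂ) / (x ^ 2 + y ^ 2) * c * (2 / l) = ((y / (x ^ 2 + y ^ 2) * c * (2 / l) : ℝ) : ℂ) by
      push_cast; ring,
    norm_real, Real.norm_eq_abs, abs_mul, abs_mul, abs_div, abs_div, abs_of_pos hl, abs_of_pos hA,
    abs_two]
  field_simp

theorem sq_add_sq_sub_mul_eq (x y : ℝ) :
    (x : ℂ) ^ 2 + (y : ℂ) ^ 2 - x * (x + y * I) = -I * y * (x + y * I) := by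
  ring_nf
  simp

theorem norm_deriv_ψ_eq {x y : ℝ} (hy : y ≠ 0) :
    ‖(y : ℂ) * ((x : ℂ) ^ 2 + (y : ℂ) ^ 2) / ((x : ℂ) ^ 2 + (y : ℂ) ^ 2 - x * (x + y * I)) ^ 2‖
      = 1 / |y| := by
  have hw : ‖(x : ℂ) + y * I‖ ≠ 0 := by
    rw [norm_add_mul_I]; exact (Real.sqrt_pos.2 (by positivity)).ne'
  have hA : (x : ℂ) ^ 2 + (y : ℂ) ^ 2 = ((‖(x : ℂ) + y * I‖ ^ 2 : ℝ) : ℂ) := by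
    rw [Complex.sq_norm, normSq_add_mul_I]; push_cast; ring
  rw [sq_add_sq_sub_mul_eq, norm_div, norm_mul, norm_pow, norm_mul, norm_mul, hA]
  simp only [norm_neg, norm_I, norm_real, Real.norm_eq_abs, abs_pow, sq_abs]
  field_simp

theorem norm_deriv_g_exp_mul_I (c : ℝ) {a : ℝ} (ha₁ : -π < a) (ha₂ : a ≤ π) :
    ‖exp (c * log (exp (a * I))) * c / exp (a * I)‖ = |c| := by
  rw [log_exp (by simpa using ha₁) (by simpa using ha₂), ← mul_assoc, ← ofReal_mul, norm_div,
    norm_mul, norm_exp_ofReal_mul_I, norm_exp_ofReal_mul_I, norm_real, Real.norm_eq_abs]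
  ring

theorem norm_deriv_f_I (l : ℝ) : ‖2 * (l : ℂ) / (l - I) ^ 2‖ = 2 * |l| / (l ^ 2 + 1) := by
  have : ‖(l : ℂ) - I‖ ^ 2 = l ^ 2 + 1 := by
    rw [show (l : ℂ) - I = l + (-1 : ℝ) * I by push_cast; ring, Complex.sq_norm,
      normSq_add_mul_I]
    ring
  rw [norm_div, norm_mul, norm_pow, this, norm_real, Real.norm_eq_abs, Complex.norm_two]

theorem norm_deriv_comp_I {l c x y : ℝ} (hl : 0 < l) (hy : y ≠ 0)
    (hxy : (x : ℂ) + y * I = exp ((c * (π - 2 * Real.arctan l) : ℝ) * I) - 1) :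
    ‖deriv (ψ x y ∘ g c ∘ f l) I‖ = |c| * (2 * l / (l ^ 2 + 1)) / |y| := by
  set a := π - 2 * Real.arctan l
  have ha₁ : -π < a := by linarith [Real.arctan_lt_pi_div_two l, Real.pi_pos]
  have ha₂ : a ≤ π := by linarith [Real.arctan_pos.2 hl]
  have hfI : f l I ∈ slitPlane := by
    rw [f_I, mem_slitPlane_iff]
    right
    rw [exp_ofReal_mul_I_im, Real.sin_pi_sub_two_mul_arctan]
    positivity
  have hgfI : g c (f l I) = x + y * I := by rw [hxy, f_I, g_exp_mul_I c ha₁ ha₂]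
  have hden : (x : ℂ) ^ 2 + (y : ℂ) ^ 2 - x * (x + y * I) ≠ 0 := by
    rw [sq_add_sq_sub_mul_eq]
    have : (x : ℂ) + y * I ≠ 0 := fun h => hy (by simpa using congrArg im h)
    simp [hy, this]
  have hf := hasDerivAt_f (l := l) (z := I) (fun h => by simpa using congrArg im h)
  have hψ := hasDerivAt_ψ x y hden
  rw [((hψ.comp_of_eq I ((hasDerivAt_g c hfI).comp I hf) hgfI.symm)).deriv, norm_mul, norm_mul,
    norm_deriv_ψ_eq hy, f_I, norm_deriv_g_exp_mul_I c ha₁ ha₂, norm_deriv_f_I, abs_of_pos hl]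
  ring

end SegmentMap

end

/-- For real `s > 1`, with `l = √(s² − 1)`, `θ = π − arctan l`,
`α = π − 2·arctan l`, and `φ_s = ψ ∘ g ∘ f` as in the paper (where
`f(z) = (l + z)/(l − z)`, `g(z) = exp((π/θ)·Log z) − 1`,
`x + iy = e^{iπα/θ} − 1`, `ψ(z) = y·z/(x² + y² − x·z)`), we have
`|φ_s′(0)| = π·sin(πα/θ)/(l·θ·(1 − cos(πα/θ)))` and
`|φ_s′(i)| = 2πl/(θ·sin(πα/θ)·(l² + 1))`. -/
theorem stmt_13 (s l θ α x y : ℝ) (hs : 1 < s)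
    (hl : l = Real.sqrt (s ^ 2 - 1))
    (hθ : θ = Real.pi - Real.arctan l)
    (hα : α = Real.pi - 2 * Real.arctan l)
    (f g ψ : ℂ → ℂ)
    (hf : ∀ z : ℂ, f z = ((l : ℂ) + z) / ((l : ℂ) - z))
    (hg : ∀ z : ℂ, g z =
      Complex.exp (((Real.pi / θ : ℝ) : ℂ) * Complex.log z) - 1)
    (hxy : (x : ℂ) + (y : ℂ) * Complex.I =
      Complex.exp (((Real.pi * α / θ : ℝ) : ℂ) * Complex.I) - 1)
    (hψ : ∀ z : ℂ, ψ z =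
      (y : ℂ) * z / ((x : ℂ) ^ 2 + (y : ℂ) ^ 2 - (x : ℂ) * z)) :
    ‖deriv (ψ ∘ g ∘ f) 0‖ =
      Real.pi * Real.sin (Real.pi * α / θ) /
        (l * θ * (1 - Real.cos (Real.pi * α / θ))) ∧
    ‖deriv (ψ ∘ g ∘ f) Complex.I‖ =
      2 * Real.pi * l / (θ * Real.sin (Real.pi * α / θ) * (l ^ 2 + 1)) := by
  obtain rfl : f = SegmentMap.f l := funext hf
  obtain rfl : g = SegmentMap.g (π / θ : ℝ) := funext hg
  obtain rfl : ψ = SegmentMap.ψ x y := funext hψ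
  have hl₀ : 0 < l := hl ▸ Real.sqrt_pos.2 (by nlinarith)
  have hθ₀ : 0 < θ := by linarith [hθ, Real.arctan_lt_pi_div_two l, Real.pi_pos]
  have hα₀ : 0 < α := by linarith [hα, Real.arctan_lt_pi_div_two l]
  have hαθ : α < θ := by linarith [hα, hθ, Real.arctan_pos.2 hl₀]
  set β := π * α / θ
  have hβ₀ : 0 < β := by positivity
  have hβπ : β < π := by rw [div_lt_iff₀ hθ₀]; nlinarith [Real.pi_pos]
  have hx : x = Real.cos β - 1 := by simpa [exp_ofReal_mul_I_re] using congrArg re hxy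
  have hy : y = Real.sin β := by simpa [exp_ofReal_mul_I_im] using congrArg im hxy
  have hy₀ : 0 < y := hy ▸ Real.sin_pos_of_pos_of_lt_pi hβ₀ hβπ
  have hA : x ^ 2 + y ^ 2 = 2 * (1 - Real.cos β) := by
    rw [hx, hy]; nlinarith [Real.sin_sq_add_cos_sq β]
  constructor
  · rw [SegmentMap.norm_deriv_comp_zero _ hl₀ (by positivity), abs_of_pos (by positivity),
      abs_of_pos hy₀, hA, hy]
    field_simp
  · rw [SegmentMap.norm_deriv_comp_I hl₀ hy₀.ne' (by rwa [← hα, show π / θ * α = β by ring]),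
      abs_of_pos (by positivity), abs_of_pos hy₀, hy]
    field_simp
end
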